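/- Let V : Fin n → Finset α be a vector and suppose EQ(V, i) holds, i.e., there is Q ⊆ Fin n with |Q| ≥ n − f and V(j) = V(i) for all j ∈ Q, where 2f < n. If also EQ(V', i') holds for another vector V' (with quorum Q'), and for all s ∈ Fin n the sets V(s) and V'(s) are comparable under inclusion, then V(i) and V'(i') are comparable under inclusion. -/

import Mathlib

open Finset

theorem Finset.inter_nonempty_of_sub_le_card {ι : Type*} [Fintype ι] [DecidableEq ι] {f : ℕ}
    (hf : 2 * f < Fintype.card ι) {Q Q' : Finset ι}
    (hQ : Fintype.card ι - f ≤ #Q) (hQ' : Fintype.card ι - f ≤ #Q') : (Q ∩ Q').Nonempty :=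
  inter_nonempty_of_card_lt_card_add_card (subset_univ Q) (subset_univ Q')
    (by rw [card_univ]; omega)

/-- if `EQ(V,i)` and `EQ(V',i')` hold with quorums of size
`≥ n − f`, `2f < n`, and all coordinates of `V` and `V'` are pairwise
comparable, then `V i` and `V' i'` are comparable. -/
theorem stmt15 {α : Type*} {n f : ℕ} (hnf : 2 * f < n)
    (V V' : Fin n → Finset α) (i i' : Fin n)
    (hEQ : ∃ Q : Finset (Fin n), n - f ≤ Q.card ∧ ∀ j ∈ Q, V j = V i)
    (hEQ' : ∃ Q' : Finset (Fin n), n - f ≤ Q'.card ∧ ∀ j ∈ Q', V' j = V' i')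
    (hcomp : ∀ s, V s ⊆ V' s ∨ V' s ⊆ V s) :
    V i ⊆ V' i' ∨ V' i' ⊆ V i := by
  obtain ⟨Q, hQ, hQV⟩ := hEQ
  obtain ⟨Q', hQ', hQV'⟩ := hEQ'
  obtain ⟨s, hs⟩ := inter_nonempty_of_sub_le_card (Q := Q) (Q' := Q')
    (by rwa [Fintype.card_fin]) (by rwa [Fintype.card_fin]) (by rwa [Fintype.card_fin])
  obtain ⟨hsQ, hsQ'⟩ := mem_inter.1 hs
  rw [← hQV s hsQ, ← hQV' s hsQ']
  exact hcomp s
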